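/- arXiv:2207.01675 — 2 statements merged into one kernel-verified Lean document; each statement's English description precedes it below -/
import Mathlib

section
/- Let N ≥ 1, 0 < r < N, s = N - r, d ≥ 0, ℓ an integer with d + ℓ + 1 ≥ 0. Let z_1, ..., z_N be the roots (in an algebraic closure of ℚ(q)) of the polynomial (z-1)^N - q z^{r-1} = 0. If d > s(ℓ+1), then the coefficient of q^d in the Schur polynomial s_λ(z_1, ..., z_N), where λ = ((d+ℓ+1)^s), is zero. -/
/- STATEMENT 10: For `N ≥ 1`, `0 < r < N`, `s = N - r`, `d ≥ 0`, `d + ℓ + 1 ≥ 0` and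
`d > s(ℓ+1)`, the coefficient of `q^d` in the Schur polynomial `s_λ(z_1,…,z_N)`,
`λ = ((d+ℓ+1)^s)`, vanishes.  Here, by Vieta for `(z-1)^N - q z^(r-1)`, the
elementary symmetric functions of the roots are `e_j = C(N,j)` for `j ≠ s+1` and
`e_{s+1} = C(N,s+1) + (-1)^s q`, and `s_λ` is the dual Jacobi–Trudi determinant
`det(e_{s - i + j})` of size `(d+ℓ+1) × (d+ℓ+1)` (conjugate partition `(s^(d+ℓ+1))`). -/

open Polynomial

/-- The elementary symmetric functions of the roots of `(z-1)^N - q z^(r-1)`,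
`s = N - r`, as polynomials in `q` over `ℚ`. -/
noncomputable def elemE (N s : ℕ) (j : ℤ) : Polynomial ℚ :=
  if j = (s : ℤ) + 1 then
    Polynomial.C (N.choose (s + 1) : ℚ) + Polynomial.C ((-1 : ℚ) ^ s) * Polynomial.X
  else if 0 ≤ j then Polynomial.C (N.choose j.toNat : ℚ) else 0

/-!
Expanding the `n × n` determinant, `n = d + ℓ + 1`, the term of a permutation `σ` is a
product of entries `e_{s + a_i}` with `a_i = i - σ i`. An entry vanishes when `a_i < -s`
and has positive degree in `q` (namely `1`) only when `a_i = 1`. Since the `a_i` sum to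
zero, if all of them are `≥ -s` then at most `s n / (s + 1)` are positive, so every term
has `q`-degree at most `s (d + ℓ + 1) / (s + 1)`, which is `< d` because `d > s (ℓ + 1)`.
-/

open Finset

lemma card_filter_pos_mul_succ_le {ι : Type*} [Fintype ι] (s : ℕ) (a : ι → ℤ)
    (hsum : ∑ i, a i = 0) (hlow : ∀ i, -(s : ℤ) ≤ a i) :
    #{i | 0 < a i} * (s + 1) ≤ s * Fintype.card ι := by
  have hpos : (#{i | 0 < a i} : ℤ) ≤ ∑ i with 0 < a i, a i := by
    simpa using card_nsmul_le_sum {i | 0 < a i} a 1 (fun i hi => (mem_filter.mp hi).2)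
  have hnonpos : -(s : ℤ) * #{i | ¬ 0 < a i} ≤ ∑ i with ¬ 0 < a i, a i := by
    simpa [mul_comm] using card_nsmul_le_sum {i | ¬ 0 < a i} a _ (fun i _ => hlow i)
  have hcard : #{i | 0 < a i} + #{i | ¬ 0 < a i} = Fintype.card ι :=
    card_filter_add_card_filter_not _
  have hsplit := sum_filter_add_sum_filter_not univ (fun i => 0 < a i) a
  zify [← hcard]
  nlinarith

lemma sum_sub_perm_eq_zero {n : ℕ} (σ : Equiv.Perm (Fin n)) :
    ∑ i : Fin n, ((i : ℤ) - σ i) = 0 := by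
  rw [sum_sub_distrib, Equiv.sum_comp σ (fun i : Fin n => (i : ℤ)), sub_self]

section Toeplitz

variable {R : Type*} [CommRing R] {s : ℕ} {f : ℤ → R[X]}

lemma natDegree_prod_shift_le (hneg : ∀ k < 0, f k = 0)
    (hdeg : ∀ k, (f k).natDegree ≤ if k = s + 1 then 1 else 0)
    {ι : Type*} [Fintype ι] (a : ι → ℤ) (hsum : ∑ i, a i = 0) :
    (∏ i, f (s + a i)).natDegree * (s + 1) ≤ s * Fintype.card ι := by
  by_cases hzero : ∃ i, f (s + a i) = 0
  · obtain ⟨i, hi⟩ := hzero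
    rw [prod_eq_zero (mem_univ i) hi]
    simp
  push Not at hzero
  have hlow : ∀ i, -(s : ℤ) ≤ a i := fun i => by
    by_contra! h
    exact hzero i (hneg _ (by omega))
  have hprod : (∏ i, f (s + a i)).natDegree ≤ #{i | 0 < a i} :=
    calc (∏ i, f (s + a i)).natDegree
        ≤ ∑ i, (f (s + a i)).natDegree := natDegree_prod_le _ _
      _ ≤ ∑ i, if 0 < a i then 1 else 0 :=
          sum_le_sum fun i _ => (hdeg _).trans (by split_ifs <;> omega)
      _ = #{i | 0 < a i} := by rw [card_filter]
  exact (Nat.mul_le_mul_right _ hprod).trans (card_filter_pos_mul_succ_le s a hsum hlow)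

lemma natDegree_det_toeplitz_le (hneg : ∀ k < 0, f k = 0)
    (hdeg : ∀ k, (f k).natDegree ≤ if k = s + 1 then 1 else 0) (n : ℕ) :
    (Matrix.of fun i j : Fin n => f (s - i + j)).det.natDegree * (s + 1) ≤ s * n := by
  rw [← Nat.le_div_iff_mul_le (Nat.succ_pos s), Matrix.det_apply]
  refine natDegree_sum_le_of_forall_le _ _ fun σ _ => (natDegree_smul_le _ _).trans ?_
  rw [Nat.le_div_iff_mul_le (Nat.succ_pos s)]
  have h := natDegree_prod_shift_le hneg hdeg _ (sum_sub_perm_eq_zero σ)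
  rw [Fintype.card_fin] at h
  convert h using 5
  simp only [Matrix.of_apply]
  ring_nf

end Toeplitz

lemma elemE_natDegree_le (N s : ℕ) (j : ℤ) :
    (elemE N s j).natDegree ≤ if j = s + 1 then 1 else 0 := by
  unfold elemE
  split_ifs
  · compute_degree
  all_goals simp

lemma elemE_of_neg (N s : ℕ) {j : ℤ} (hj : j < 0) : elemE N s j = 0 := by
  unfold elemE
  rw [if_neg (by omega), if_neg (by omega)]

theorem coeff_qd_schur_vanishes_general (N r d : ℕ) (ℓ : ℤ)
    (hrN : r < N) (hℓ : 0 ≤ (d : ℤ) + ℓ + 1) (hd : ((N : ℤ) - r) * (ℓ + 1) < d) :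
    (Matrix.det (Matrix.of fun i j : Fin (((d : ℤ) + ℓ + 1).toNat) =>
        elemE N (N - r) ((N : ℤ) - (r : ℤ) - ((i : ℕ) + 1) + ((j : ℕ) + 1)))).coeff d
      = 0 := by
  set s := N - r
  set n := ((d : ℤ) + ℓ + 1).toNat
  have hn : (n : ℤ) = d + ℓ + 1 := Int.toNat_of_nonneg hℓ
  have hs : (s : ℤ) = N - r := by omega
  have hmatrix : (Matrix.of fun i j : Fin n =>
      elemE N s ((N : ℤ) - r - ((i : ℕ) + 1) + ((j : ℕ) + 1))) =
      Matrix.of fun i j : Fin n => elemE N s (s - i + j) := by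
    ext i j
    simp only [Matrix.of_apply, hs]
    ring_nf
  have hbound := natDegree_det_toeplitz_le (fun _ => elemE_of_neg N s) (elemE_natDegree_le N s) n
  rw [hmatrix]
  refine coeff_eq_zero_of_natDegree_lt (Nat.lt_of_mul_lt_mul_right (a := s + 1) ?_)
  zify at hbound ⊢
  nlinarith

theorem coeff_qd_schur_vanishes (N r d : ℕ) (ℓ : ℤ) (hN : 1 ≤ N) (hr0 : 0 < r)
    (hrN : r < N) (hℓ : 0 ≤ (d : ℤ) + ℓ + 1) (hd : ((N : ℤ) - r) * (ℓ + 1) < d) :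
    (Matrix.det (Matrix.of fun i j : Fin (((d : ℤ) + ℓ + 1).toNat) =>
        elemE N (N - r) ((N : ℤ) - (r : ℤ) - ((i : ℕ) + 1) + ((j : ℕ) + 1)))).coeff d
      = 0 :=
  coeff_qd_schur_vanishes_general N r d ℓ hrN hℓ hd
end

section
/- Let N ≥ 1, 0 ≤ s ≤ N, d ≥ 0. Let e_j (0 ≤ j ≤ N) be given by e_j = C(N,j) for j ≠ s+1 and e_{s+1} = C(N,s+1) + (-1)^s q (with e_j = 0 for j > N). Let λ = ((d+1)^s) and define s_λ via the Jacobi–Trudi formula in elementary symmetric functions, a (d+1)×(d+1) determinant. Then [q^d] s_λ = (-1)^{(s-1)d} C(N, s-d), where C(N, s-d) = 0 if s < d. Equivalently, the Euler characteristic χ(Quot_d(O^N, r), det O^{[d]}) from Corollary 4.1 with ℓ = 0 equals C(N, r+d). -/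
/-! Every entry `e_{s-i+j}` of the Jacobi–Trudi matrix has degree at most one in `q`, and degree
one occurs only on the superdiagonal `j = i + 1`, where the entry is `e_{s+1}`. A permutation
of `Fin (d + 1)` sending `d` points to their successors is the rotation `i ↦ i + 1`, so the
coefficient of `q^d` in the determinant is the rotation's term alone: its sign `(-1)^d`, the
leading coefficients `((-1)^s)^d` of the superdiagonal, and the corner entry
`e_{s-d} = C(N, s-d)`. -/

open Polynomial

open Finset Matrix

theorem Equiv.Perm.eq_of_forall_ne_apply_eq {α : Type*} {σ τ : Equiv.Perm α} (a : α)
    (h : ∀ x ≠ a, σ x = τ x) : σ = τ := by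
  have ha : σ a = τ a := by
    by_contra hne
    have hb : τ.symm (σ a) ≠ a := fun hba =>
      hne ((τ.apply_symm_apply (σ a)).symm.trans (congrArg τ hba))
    exact hb (σ.injective ((h _ hb).trans (τ.apply_symm_apply _)))
  ext x
  by_cases hx : x = a
  · rw [hx, ha]
  · rw [h x hx]

theorem card_filter_val_apply_eq_succ_lt {n : ℕ} {σ : Equiv.Perm (Fin (n + 1))}
    (hσ : σ ≠ finRotate (n + 1)) : #{i | (σ i : ℕ) = i + 1} < n := by
  set S : Finset (Fin (n + 1)) := {i | (σ i : ℕ) = i + 1}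
  have hS : S ⊆ univ.erase (Fin.last n) := by
    intro i hi
    simp only [S, mem_filter, mem_univ, true_and] at hi
    refine mem_erase.2 ⟨fun hlast => ?_, mem_univ _⟩
    have := (σ i).isLt
    rw [hlast, Fin.val_last] at hi
    omega
  by_contra! hle
  have hSeq : S = univ.erase (Fin.last n) :=
    eq_of_subset_of_card_le hS (by simpa using hle)
  refine hσ (Equiv.Perm.eq_of_forall_ne_apply_eq (Fin.last n) fun i hi => Fin.ext ?_)
  have hiS : i ∈ S := hSeq ▸ mem_erase.2 ⟨hi, mem_univ _⟩
  rw [coe_finRotate_of_ne_last hi]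
  simpa [S] using hiS

section SuperdiagonalDegree

variable {R : Type*} [CommRing R] {n : ℕ} {M : Matrix (Fin (n + 1)) (Fin (n + 1)) R[X]}

theorem natDegree_prod_apply_le_card
    (hM : ∀ i j, (M i j).natDegree ≤ if (j : ℕ) = i + 1 then 1 else 0)
    (σ : Equiv.Perm (Fin (n + 1))) :
    (∏ i, M i (σ i)).natDegree ≤ #{i | (σ i : ℕ) = i + 1} := by
  rw [card_filter]
  exact (natDegree_prod_le _ _).trans (sum_le_sum fun i _ => hM i (σ i))

theorem coeff_prod_apply_finRotate
    (hM : ∀ i j, (M i j).natDegree ≤ if (j : ℕ) = i + 1 then 1 else 0) :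
    (∏ i, M i (finRotate (n + 1) i)).coeff n
      = (∏ i : Fin n, (M i.castSucc i.succ).coeff 1) * (M (Fin.last n) 0).coeff 0 := by
  have hsucc (i : Fin n) : finRotate (n + 1) i.castSucc = i.succ :=
    Fin.ext (by rw [coe_finRotate_of_ne_last (Fin.castSucc_ne_last i)]; simp)
  have hlast : M (Fin.last n) 0 = C ((M (Fin.last n) 0).coeff 0) :=
    eq_C_of_natDegree_le_zero <|
      (hM (Fin.last n) 0).trans_eq (if_neg (by rw [Fin.val_zero, Fin.val_last]; omega))
  rw [Fin.prod_univ_castSucc, finRotate_last, hlast, coeff_mul_C, coeff_C_zero]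
  simp only [hsucc]
  congr 1
  simpa using coeff_prod_of_natDegree_le (s := univ) (fun i : Fin n => M i.castSucc i.succ) 1
    fun i _ => (hM _ _).trans_eq (if_pos (by simp))

theorem coeff_det_of_natDegree_le_superdiag
    (hM : ∀ i j, (M i j).natDegree ≤ if (j : ℕ) = i + 1 then 1 else 0) :
    M.det.coeff n
      = (-1) ^ n *
        ((∏ i : Fin n, (M i.castSucc i.succ).coeff 1) * (M (Fin.last n) 0).coeff 0) := by
  rw [← det_transpose, det_apply, finsetSum_coeff, sum_eq_single (finRotate (n + 1))]
  · simp only [transpose_apply, sign_finRotate, Nat.add_sub_cancel, Units.smul_def]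
    rw [coeff_smul, coeff_prod_apply_finRotate hM]
    simp
  · intro σ _ hσ
    rw [coeff_smul, coeff_eq_zero_of_natDegree_lt, smul_zero]
    exact (natDegree_prod_apply_le_card hM σ).trans_lt (card_filter_val_apply_eq_succ_lt hσ)
  · simp

end SuperdiagonalDegree

theorem natDegree_elemE_le (N s : ℕ) (j : ℤ) :
    (elemE N s j).natDegree ≤ if j = (s : ℤ) + 1 then 1 else 0 := by
  unfold elemE
  split_ifs
  · rw [add_comm]
    exact (natDegree_linear (pow_ne_zero s (neg_ne_zero.2 one_ne_zero))).le
  · simp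
  · simp

theorem coeff_elemE_succ_one (N s : ℕ) : (elemE N s ((s : ℤ) + 1)).coeff 1 = (-1) ^ s := by
  rw [elemE, if_pos rfl, coeff_add, coeff_C_mul_X, coeff_C]
  simp

theorem coeff_elemE_sub_zero (N s d : ℕ) :
    (elemE N s ((s : ℤ) - d)).coeff 0 = if d ≤ s then (N.choose (s - d) : ℚ) else 0 := by
  have hne : (s : ℤ) - d ≠ s + 1 := by omega
  by_cases hds : d ≤ s
  · have : ((s : ℤ) - d).toNat = s - d := by omega
    simp [elemE, hne, hds, this]
  · simp [elemE, hne, hds]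

theorem coeff_qd_schur_rectangular_general (N s d : ℕ) :
    (Matrix.det (Matrix.of fun i j : Fin (d + 1) =>
        elemE N s ((s : ℤ) - ((i : ℕ) + 1) + ((j : ℕ) + 1)))).coeff d
      = (-1 : ℚ) ^ (((s : ℤ) - 1) * d) *
        (if d ≤ s then (N.choose (s - d) : ℚ) else 0) := by
  refine (coeff_det_of_natDegree_le_superdiag fun i j =>
    (natDegree_elemE_le N s _).trans_eq (if_congr (by omega) rfl rfl)).trans ?_
  have hsuper (i : Fin d) :
      (s : ℤ) - ((i.castSucc : ℕ) + 1) + ((i.succ : ℕ) + 1) = s + 1 := by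
    simp only [Fin.val_castSucc, Fin.val_succ]; push_cast; ring
  have hcorner :
      (s : ℤ) - ((Fin.last d : ℕ) + 1) + (((0 : Fin (d + 1)) : ℕ) + 1) = s - d := by
    simp only [Fin.val_last, Fin.val_zero]; push_cast; ring
  simp only [hsuper, hcorner, coeff_elemE_succ_one, coeff_elemE_sub_zero, prod_const, card_univ,
    Fintype.card_fin]
  rw [_root_.zpow_mul, zpow_sub₀ (by norm_num), zpow_one, zpow_natCast, zpow_natCast]
  ring

theorem coeff_qd_schur_rectangular (N s d : ℕ) (hN : 1 ≤ N) (hs : s ≤ N) :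
    (Matrix.det (Matrix.of fun i j : Fin (d + 1) =>
        elemE N s ((s : ℤ) - ((i : ℕ) + 1) + ((j : ℕ) + 1)))).coeff d
      = (-1 : ℚ) ^ (((s : ℤ) - 1) * d) *
        (if d ≤ s then (N.choose (s - d) : ℚ) else 0) :=
  coeff_qd_schur_rectangular_general N s d
end
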